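/- (Convergence from below.) For every state s of the stochastic game and every direction d in Dir, L_inf(s)[d] = Ach(s)[d], where L_inf(s) is the union of the MO-BVI lower iterates L_i(s). -/

import Mathlib

open scoped Classical Pointwise

noncomputable section

/-- Vectors in `ℝ^n`. -/
abbrev Vec (n : ℕ) := Fin n → ℝ

/-- Downward closure within the nonnegative orthant. -/
def dwc {n : ℕ} (X : Set (Vec n)) : Set (Vec n) :=
  {y | (∀ i, 0 ≤ y i) ∧ ∃ x ∈ X, ∀ i, y i ≤ x i}

/-- The unit cube `[0,1]^n`. -/
def unitCube (n : ℕ) : Set (Vec n) := {v | ∀ i, 0 ≤ v i ∧ v i ≤ 1}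

/-- `Box1 = dwc({(1,...,1)})`. -/
def Box1 (n : ℕ) : Set (Vec n) := dwc {fun _ => 1}

/-- Euclidean norm on `ℝ^n`. -/
def euclNorm {n : ℕ} (x : Vec n) : ℝ := Real.sqrt (∑ i, x i ^ 2)

/-- The direction (projective ray) `[v]` of a vector `v`. -/
def dirOf {n : ℕ} (v : Vec n) : Set (Vec n) := {w | ∃ l : ℝ, 0 < l ∧ w = l • v}

/-- The set of all directions in the nonnegative orthant. -/
def Dir (n : ℕ) : Set (Set (Vec n)) :=
  {D | ∃ v : Vec n, v ≠ 0 ∧ (∀ i, 0 ≤ v i) ∧ D = dirOf v}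

/-- `X` evaluated in direction `D`:  `X[D] = sup { ‖x‖ : x ∈ X, [x] = D }`
(the supremum of the empty set of reals is `0`). -/
def evalIn {n : ℕ} (X : Set (Vec n)) (D : Set (Vec n)) : ℝ :=
  sSup (euclNorm '' {x | x ∈ X ∧ dirOf x = D})

/-- A finite turn-based two-player stochastic game.  `isMax s` holds for
Maximizer (`S_Box`) states; the remaining states belong to Minimizer (`S_Circ`). -/
structure SG (S A : Type) [Fintype S] [Fintype A] where
  isMax : S → Prop
  s0 : S
  Av : S → Finset A
  av_nonempty : ∀ s, (Av s).Nonempty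
  δ : S → A → S → ℝ
  δ_nonneg : ∀ s a s', 0 ≤ δ s a s'
  δ_sum : ∀ s a, a ∈ Av s → ∑ s' : S, δ s a s' = 1

variable {S A : Type} [Fintype S] [Fintype A] {n : ℕ}

/-- Indicator vector `Ind(s)` of the generalized-reachability objective. -/
def indVec (Tgt : Fin n → Set S) (s : S) : Vec n := fun i => if s ∈ Tgt i then 1 else 0

/-- The state-action set `f(s,a) = (dwc({Ind(s)}) + Σ_{s'} δ(s,a)(s') · f(s')) ∩ Box1`. -/
def SA (G : SG S A) (Tgt : Fin n → Set S) (f : S → Set (Vec n)) (s : S) (a : A) :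
    Set (Vec n) :=
  (dwc {indVec Tgt s} + ∑ s' : S, G.δ s a s' • f s') ∩ Box1 n

/-- The multi-dimensional Bellman operator. -/
def Bop (G : SG S A) (Tgt : Fin n → Set S) (f : S → Set (Vec n)) : S → Set (Vec n) :=
  fun s =>
    if G.isMax s then convexHull ℝ (⋃ a ∈ G.Av s, SA G Tgt f s a)
    else ⋂ a ∈ G.Av s, SA G Tgt f s a

/-- `(s,a)` is an exit of `X` if with positive probability a successor outside `X`
is chosen. -/
def IsExit (G : SG S A) (X : Set S) (s : S) (a : A) : Prop :=
  ∃ t, 0 < G.δ s a t ∧ t ∉ X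

/-- All exits of a set of states. -/
def Exits (G : SG S A) (X : Set S) : Set (S × A) :=
  {p | p.1 ∈ X ∧ p.2 ∈ G.Av p.1 ∧ IsExit G X p.1 p.2}

/-- End component w.r.t. an availability restriction `Av'`. -/
def IsECWith (G : SG S A) (Av' : S → Finset A) (X : Set S) : Prop :=
  X.Nonempty ∧ ∃ B : Finset A, B.Nonempty ∧
    (∀ a ∈ B, ∃ s ∈ X, a ∈ Av' s) ∧
    (∀ s ∈ X, ∀ a ∈ B, a ∈ Av' s → ¬ IsExit G X s a) ∧
    (∀ s ∈ X, ∀ t ∈ X, Relation.ReflTransGen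
      (fun u v => u ∈ X ∧ v ∈ X ∧ ∃ a ∈ B, a ∈ Av' u ∧ 0 < G.δ u a v) s t)

/-- End component of the game. -/
def IsEC (G : SG S A) (X : Set S) : Prop := IsECWith G G.Av X

/-- Maximal end component of the game. -/
def IsMEC (G : SG S A) (X : Set S) : Prop :=
  IsEC G X ∧ ∀ Y, IsEC G Y → X ⊆ Y → Y = X

/-- MEC of the game restricted to the states `T` with available actions `Av'`. -/
def IsMECIn (G : SG S A) (T : Set S) (Av' : S → Finset A) (X : Set S) : Prop :=
  X ⊆ T ∧ IsECWith G Av' X ∧ ∀ Y, Y ⊆ T → IsECWith G Av' Y → X ⊆ Y → Y = X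

/-- The best-exit set `BE_f(T)`. -/
def BE (G : SG S A) (Tgt : Fin n → Set S) (f : S → Set (Vec n)) (T : Set S) :
    Set (Vec n) :=
  (dwc {∑ s : S, if s ∈ T then indVec Tgt s else 0} +
      convexHull ℝ
        (if (Exits G (T ∩ {s | G.isMax s})).Nonempty then
          ⋃ p ∈ Exits G (T ∩ {s | G.isMax s}), SA G Tgt f p.1 p.2
        else {0})) ∩ Box1 n

/-- The minimal value `min_{b ∈ Av(s)} f(s,b)[D]`. -/
def minEval (G : SG S A) (Tgt : Fin n → Set S) (f : S → Set (Vec n)) (s : S)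
    (D : Set (Vec n)) : ℝ :=
  (G.Av s).inf' (G.av_nonempty s) fun b => evalIn (SA G Tgt f s b) D

/-- `argmin_{a ∈ Av(s)} f(s,a)[D]`. -/
def argminSet (G : SG S A) (Tgt : Fin n → Set S) (f : S → Set (Vec n)) (s : S)
    (D : Set (Vec n)) : Finset A :=
  (G.Av s).filter fun a => evalIn (SA G Tgt f s a) D = minEval G Tgt f s D

/-- `R_B`: all directions in which exactly the actions of `B` are optimal
for Minimizer at `s`. -/
def argminRegion (G : SG S A) (Tgt : Fin n → Set S) (f : S → Set (Vec n)) (s : S)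
    (B : Finset A) : Set (Set (Vec n)) :=
  {D ∈ Dir n | argminSet G Tgt f s D = B}

/-- A partition of the set `Dir` of directions into (nonempty) regions. -/
def IsPartitionOfDir (n : ℕ) (P : Set (Set (Set (Vec n)))) : Prop :=
  (∀ R ∈ P, R.Nonempty ∧ R ⊆ Dir n) ∧
  (∀ R1 ∈ P, ∀ R2 ∈ P, R1 ≠ R2 → R1 ∩ R2 = ∅) ∧
  ⋃₀ P = Dir n

/-- A partition of `Dir` into regions that is consistent w.r.t. `T` and `f`. -/
def ConsistentPartition (G : SG S A) (Tgt : Fin n → Set S) (T : Set S)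
    (f : S → Set (Vec n)) (P : Set (Set (Set (Vec n)))) : Prop :=
  IsPartitionOfDir n P ∧
  ∀ R ∈ P, ∀ d1 ∈ R, ∀ d2 ∈ R, ∀ s ∈ T, ¬ G.isMax s → ∀ a ∈ G.Av s,
    (evalIn (SA G Tgt f s a) d1 = minEval G Tgt f s d1 ↔
      evalIn (SA G Tgt f s a) d2 = minEval G Tgt f s d2)

/-- The GET_REGIONS procedure: the common refinement over all Minimizer states of `T`
of their argmin partitions. -/
def getRegions (G : SG S A) (Tgt : Fin n → Set S) (T : Set S) (f : S → Set (Vec n)) :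
    Set (Set (Set (Vec n))) :=
  {R | R.Nonempty ∧ ∃ φ : S → Finset A,
    R = Dir n ∩ ⋂ s ∈ {s ∈ T | ¬ G.isMax s}, argminRegion G Tgt f s (φ s)}

/-- Availability restricted to Minimizer-optimal actions (w.r.t. `f` in direction `D`)
inside `T`. -/
def restrictedAv (G : SG S A) (Tgt : Fin n → Set S) (f : S → Set (Vec n)) (T : Set S)
    (D : Set (Vec n)) : S → Finset A := fun s =>
  if s ∈ T ∧ ¬ G.isMax s then argminSet G Tgt f s D else G.Av s

/-- The FIND_SECs procedure. -/
def findSECs (G : SG S A) (Tgt : Fin n → Set S) (f : S → Set (Vec n)) (T : Set S)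
    (R : Set (Set (Vec n))) : Set (Set S) :=
  {X | ∃ D ∈ R, IsMECIn G T (restrictedAv G Tgt f T D) X}

/-- The point set of a region: `{v ∈ [0,1]^n : v ≠ 0, [v] ∈ R}`. -/
def regionPts (n : ℕ) (R : Set (Set (Vec n))) : Set (Vec n) :=
  {v | v ∈ unitCube n ∧ v ≠ 0 ∧ dirOf v ∈ R}

/-- The DEFLATE_SECs procedure. -/
def deflate (G : SG S A) (Tgt : Fin n → Set S) (L U : S → Set (Vec n)) :
    S → Set (Vec n) := fun s =>
  if ∃ T, IsMEC G T ∧ s ∈ T then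
    ⋃ T ∈ {T | IsMEC G T ∧ s ∈ T}, ⋃ R ∈ getRegions G Tgt T L,
      if ∃ C ∈ findSECs G Tgt L T R, s ∈ C then
        ⋃ C ∈ {C | C ∈ findSECs G Tgt L T R ∧ s ∈ C},
          U s ∩ BE G Tgt U C ∩ regionPts n R
      else U s ∩ regionPts n R
  else U s

/-- The MO-BVI iterates: `bvi G Tgt i = (L_i, U_i)`. -/
def bvi (G : SG S A) (Tgt : Fin n → Set S) : ℕ → (S → Set (Vec n)) × (S → Set (Vec n))
  | 0 => (fun _ => {0}, fun _ => Box1 n)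
  | i + 1 =>
    (Bop G Tgt (bvi G Tgt i).1,
      deflate G Tgt (Bop G Tgt (bvi G Tgt i).1) (Bop G Tgt (bvi G Tgt i).2))

/-- `L_inf`. -/
def Llim (G : SG S A) (Tgt : Fin n → Set S) : S → Set (Vec n) :=
  fun s => ⋃ i : ℕ, (bvi G Tgt i).1 s

/-- `U_inf`. -/
def Ulim (G : SG S A) (Tgt : Fin n → Set S) : S → Set (Vec n) :=
  fun s => ⋂ i : ℕ, (bvi G Tgt i).2 s

/-- A (total, history-dependent, randomizing) strategy. -/
structure Strategy (G : SG S A) where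
  choice : List (S × A) → S → A → ℝ
  nonneg : ∀ h s a, 0 ≤ choice h s a
  supp : ∀ h s a, a ∉ G.Av s → choice h s a = 0
  sum_one : ∀ h s, ∑ a ∈ G.Av s, choice h s a = 1

/-- Probability of reaching `T` within `k` steps under the Maximizer strategy `σ`
and Minimizer strategy `τ`, from state `s` after history `h`. -/
def reachBy (G : SG S A) (σ τ : Strategy G) (T : Set S) :
    ℕ → List (S × A) → S → ℝ
  | 0, _, s => if s ∈ T then 1 else 0
  | k + 1, h, s =>
    if s ∈ T then 1
    else ∑ a ∈ G.Av s,
      (if G.isMax s then σ.choice h s a else τ.choice h s a) *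
        ∑ s' : S, G.δ s a s' * reachBy G σ τ T k (h ++ [(s, a)]) s'

/-- Probability of the event `◇T` in the Markov chain induced by `(σ,τ)` from `s`. -/
def probReach (G : SG S A) (σ τ : Strategy G) (s : S) (T : Set S) : ℝ :=
  ⨆ k : ℕ, reachBy G σ τ T k [] s

/-- The set `Ach(s)` of achievable vectors from `s`. -/
def Ach (G : SG S A) (Tgt : Fin n → Set S) (s : S) : Set (Vec n) :=
  {v | v ∈ unitCube n ∧ ∃ σ : Strategy G, ∀ τ : Strategy G, ∀ i : Fin n,
    v i ≤ probReach G σ τ s (Tgt i)}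

/-- A regional simple end component for region `R`. -/
def IsRegionalSEC (G : SG S A) (Tgt : Fin n → Set S) (T' : Set S)
    (R : Set (Set (Vec n))) : Prop :=
  IsEC G T' ∧ ∀ D ∈ R, ∀ s ∈ T',
    evalIn (Ach G Tgt s) D = evalIn (BE G Tgt (Ach G Tgt) T') D

/-- The common refinement of two partitions of `Dir`. -/
def commonRefinement (n : ℕ) (P1 P2 : Set (Set (Set (Vec n)))) :
    Set (Set (Set (Vec n))) :=
  {R | R.Nonempty ∧ ∃ R1 ∈ P1, ∃ R2 ∈ P2, R = R1 ∩ R2}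

/-!
The lower iterates are sandwiched between finite-horizon achievable sets,
`L_k(s) ⊆ AchBy k s ⊆ L_{k+1}(s)`, where `AchBy k s` collects the vectors Maximizer can secure
within `k` steps against every Minimizer strategy; hence `L_inf(s) = ⋃ k, AchBy k s`.
For the first inclusion, a Bellman decomposition of `v ∈ L_{k+1}(s)` prescribes a first move at `s`
and continuation vectors in `L_k ⊆ AchBy k`, whose strategies are glued behind that move;
since every `L_k(s)` is convex, a convex combination at a Maximizer state is realised by
randomising over actions. For the second, the continuation vectors are what the shifts of a
`(k+1)`-step strategy guarantee against every Minimizer strategy.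

Conversely, if `σ` achieves `v`, then for `c < 1` the `k`-step reachability probabilities
under `σ` exceed `c • v` for a horizon `k` that does not depend on Minimizer's strategy: they are
continuous and increasing in `k` on the compact space of Minimizer's strategies (a Dini argument).
Since scaling by `c ∈ (0, 1)` keeps directions, the suprema in every direction agree.
-/

open Set

theorem exists_sum_smul_of_mem_convexHull_biUnion {ι E : Type*} [AddCommGroup E] [Module ℝ E]
    {t : Finset ι} {K : ι → Set E} (hK : ∀ i ∈ t, Convex ℝ (K i))
    (hne : ∀ i ∈ t, (K i).Nonempty) {v : E} (hv : v ∈ convexHull ℝ (⋃ i ∈ t, K i)) :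
    ∃ q : ι → ℝ, ((∀ i, 0 ≤ q i) ∧ (∀ i, i ∉ t → q i = 0) ∧ ∑ i ∈ t, q i = 1) ∧
      ∃ z : ι → E, (∀ i ∈ t, z i ∈ K i) ∧ v = ∑ i ∈ t, q i • z i := by
  classical
  obtain ⟨κ, _, w, x, hw0, hw1, hx, rfl⟩ := mem_convexHull_iff_exists_fintype.1 hv
  choose idx hidx hxK using fun j => mem_iUnion₂.1 (hx j)
  let q : ι → ℝ := fun i => ∑ j with idx j = i, w j
  have hq0 : ∀ i, 0 ≤ q i := fun i => Finset.sum_nonneg fun j _ => hw0 j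
  let z : ι → E := fun i => if h : i ∈ t ∧ q i = 0 then (hne i h.1).some
    else (q i)⁻¹ • ∑ j with idx j = i, w j • x j
  have hqz : ∀ i, q i • z i = ∑ j with idx j = i, w j • x j := by
    intro i
    by_cases hqi : q i = 0
    · have hw : ∀ j ∈ Finset.univ.filter (idx · = i), w j = 0 :=
        (Finset.sum_eq_zero_iff_of_nonneg fun j _ => hw0 j).1 hqi
      rw [hqi, zero_smul, Finset.sum_eq_zero fun j hj => by rw [hw j hj, zero_smul]]
    · simp only [z, hqi, and_false, dite_false, smul_inv_smul₀ hqi]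
  refine ⟨q, ⟨hq0, fun i hi => Finset.sum_eq_zero fun j hj => ?_, ?_⟩, z, fun i hi => ?_, ?_⟩
  · exact absurd ((Finset.mem_filter.1 hj).2 ▸ hidx j) hi
  · rw [← hw1]
    exact Finset.sum_fiberwise_of_maps_to (fun j _ => hidx j) w
  · by_cases hqi : q i = 0
    · simpa [z, hi, hqi] using (hne i hi).some_mem
    simp only [z, hqi, and_false, dite_false, Finset.smul_sum, smul_smul]
    refine (hK i hi).sum_mem (fun j _ => mul_nonneg (inv_nonneg.2 (hq0 i)) (hw0 j)) ?_
      fun j hj => (Finset.mem_filter.1 hj).2 ▸ hxK j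
    rw [← Finset.mul_sum, inv_mul_cancel₀ hqi]
  · simp_rw [hqz]
    exact (Finset.sum_fiberwise_of_maps_to (fun j _ => hidx j) _).symm

theorem finsetSum_smul_subset_convexHull {ι E : Type*} [AddCommGroup E] [Module ℝ E]
    {t : Finset ι} {q : ι → ℝ} (hq0 : ∀ i ∈ t, 0 ≤ q i) (hq1 : ∑ i ∈ t, q i = 1)
    (K : ι → Set E) : ∑ i ∈ t, q i • K i ⊆ convexHull ℝ (⋃ i ∈ t, K i) := by
  intro v hv
  obtain ⟨g, hg, rfl⟩ := (mem_finsetSum _ _ _).1 hv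
  choose! z hz hgz using fun i (hi : i ∈ t) => mem_smul_set.1 (hg hi)
  rw [← Finset.sum_congr rfl hgz]
  exact (convex_convexHull ℝ _).sum_mem hq0 hq1
    fun i hi => subset_convexHull ℝ _ (mem_biUnion hi (hz i hi))

theorem le_sum_mul_iInf {κ ι : Type*} [Nonempty ι] {t : Finset κ} {w : κ → ℝ}
    (hw : ∀ j ∈ t, 0 ≤ w j) {F : κ → ι → ℝ} {x : ℝ}
    (h : ∀ c : κ → ι, x ≤ ∑ j ∈ t, w j * F j (c j)) : x ≤ ∑ j ∈ t, w j * ⨅ m, F j m := by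
  refine le_of_forall_pos_le_add fun ε hε => ?_
  set W := ∑ j ∈ t, w j
  have hW : 0 ≤ W := Finset.sum_nonneg hw
  choose c hc using fun j =>
    exists_lt_of_ciInf_lt (lt_add_of_pos_right (⨅ m, F j m) (by positivity : 0 < ε / (W + 1)))
  have hWε : W * (ε / (W + 1)) ≤ ε := by
    rw [← mul_div_assoc, div_le_iff₀ (by linarith)]
    nlinarith
  calc x ≤ ∑ j ∈ t, w j * F j (c j) := h c
    _ ≤ ∑ j ∈ t, w j * ((⨅ m, F j m) + ε / (W + 1)) :=
      Finset.sum_le_sum fun j hj => mul_le_mul_of_nonneg_left (hc j).le (hw j hj)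
    _ = ∑ j ∈ t, w j * (⨅ m, F j m) + W * (ε / (W + 1)) := by
      simp only [mul_add, Finset.sum_add_distrib, W, Finset.sum_mul]
    _ ≤ _ := by linarith

theorem exists_forall_lt_of_monotone {X : Type*} [TopologicalSpace X] [CompactSpace X]
    {F : ℕ → X → ℝ} (hF : ∀ k, Continuous (F k)) (hmono : Monotone F) {c : ℝ}
    (h : ∀ x, ∃ k, c < F k x) : ∃ k, ∀ x, c < F k x := by
  obtain ⟨k, hk⟩ := isCompact_univ.elim_directed_cover (fun k => {x | c < F k x})
    (fun k => isOpen_lt continuous_const (hF k)) (fun x _ => mem_iUnion.2 (h x))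
    (Monotone.directed_le fun k l hkl x hx => lt_of_lt_of_le hx (hmono hkl x))
  exact ⟨k, fun x => hk (mem_univ x)⟩

lemma dwc_singleton (x : Vec n) : dwc {x} = Icc 0 x := by
  ext y
  simp [dwc, Pi.le_def]

lemma Box1_eq_Icc : Box1 n = Icc 0 1 := dwc_singleton _

lemma unitCube_eq_Icc : unitCube n = Icc 0 1 := by
  ext v
  simp [unitCube, Pi.le_def, forall_and]

lemma indVec_nonneg {S : Type} (Tgt : Fin n → Set S) (s : S) : 0 ≤ indVec Tgt s := fun i => by
  unfold indVec; split_ifs <;> norm_num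

def IsOrthantLower (X : Set (Vec n)) : Prop := ∀ ⦃x⦄, x ∈ X → 0 ≤ x ∧ Icc 0 x ⊆ X

lemma isOrthantLower_Icc (x : Vec n) : IsOrthantLower (Icc 0 x) :=
  fun _ hy => ⟨hy.1, Icc_subset_Icc_right hy.2⟩

lemma isOrthantLower_zero : IsOrthantLower ({0} : Set (Vec n)) := by
  simpa using isOrthantLower_Icc (0 : Vec n)

lemma IsOrthantLower.inter {X Y : Set (Vec n)} (hX : IsOrthantLower X) (hY : IsOrthantLower Y) :
    IsOrthantLower (X ∩ Y) :=
  fun _ hx => ⟨(hX hx.1).1, subset_inter (hX hx.1).2 (hY hx.2).2⟩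

lemma IsOrthantLower.smul {X : Set (Vec n)} (hX : IsOrthantLower X) {c : ℝ} (hc : 0 ≤ c) :
    IsOrthantLower (c • X) := by
  rintro _ ⟨x, hx, rfl⟩
  refine ⟨smul_nonneg hc (hX hx).1, fun y hy => ?_⟩
  rcases hc.eq_or_lt with rfl | hc
  · exact ⟨x, hx, by simpa using (le_antisymm (by simpa using hy.2) hy.1).symm⟩
  · refine ⟨c⁻¹ • y, (hX hx).2 ⟨smul_nonneg (inv_nonneg.2 hc.le) hy.1, ?_⟩, smul_inv_smul₀ hc.ne' y⟩
    exact (inv_smul_le_iff_of_pos hc).2 hy.2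

/-- Riesz decomposition: `z ≤ x + y` splits as `z ⊓ x + (z - z ⊓ x)`. -/
lemma IsOrthantLower.add {X Y : Set (Vec n)} (hX : IsOrthantLower X) (hY : IsOrthantLower Y) :
    IsOrthantLower (X + Y) := by
  rintro _ ⟨x, hx, y, hy, rfl⟩
  obtain ⟨hx0, hxX⟩ := hX hx
  obtain ⟨hy0, hyY⟩ := hY hy
  refine ⟨add_nonneg hx0 hy0, fun z hz => ⟨z ⊓ x, hxX ⟨le_inf hz.1 hx0, inf_le_right⟩,
    z - z ⊓ x, hyY ⟨sub_nonneg.2 inf_le_left, ?_⟩, add_sub_cancel _ _⟩⟩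
  rw [sub_le_iff_le_add, add_inf]
  exact le_inf (le_add_of_nonneg_left hy0) (by rw [add_comm]; exact hz.2)

lemma IsOrthantLower.finsetSum {ι : Type*} (t : Finset ι) {X : ι → Set (Vec n)}
    (hX : ∀ i ∈ t, IsOrthantLower (X i)) : IsOrthantLower (∑ i ∈ t, X i) :=
  Finset.sum_induction _ IsOrthantLower (fun _ _ => IsOrthantLower.add) isOrthantLower_zero hX

section BellmanOperator

variable {G : SG S A} {Tgt : Fin n → Set S} {f g : S → Set (Vec n)} {s : S} {a : A}

lemma isOrthantLower_dwc_add_sum (hf : ∀ s', IsOrthantLower (f s')) :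
    IsOrthantLower (dwc {indVec Tgt s} + ∑ s' : S, G.δ s a s' • f s') := by
  rw [dwc_singleton]
  exact (isOrthantLower_Icc _).add
    (IsOrthantLower.finsetSum _ fun s' _ => (hf s').smul (G.δ_nonneg s a s'))

lemma mem_SA_of_le (hf : ∀ s', IsOrthantLower (f s')) {y : S → Vec n} (hy : ∀ s', y s' ∈ f s')
    {z : Vec n} (hz : z ∈ Box1 n) (hle : z ≤ indVec Tgt s + ∑ s', G.δ s a s' • y s') :
    z ∈ SA G Tgt f s a := by
  have hx : indVec Tgt s + ∑ s', G.δ s a s' • y s' ∈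
      dwc {indVec Tgt s} + ∑ s' : S, G.δ s a s' • f s' :=
    add_mem_add (by rw [dwc_singleton]; exact ⟨indVec_nonneg Tgt s, le_rfl⟩)
      (finsetSum_mem_finsetSum _ _ _ fun s' _ => smul_mem_smul_set (hy s'))
  refine ⟨(isOrthantLower_dwc_add_sum hf hx).2 ⟨?_, hle⟩, hz⟩
  rw [Box1_eq_Icc] at hz
  exact hz.1

lemma isOrthantLower_SA (hf : ∀ s', IsOrthantLower (f s')) : IsOrthantLower (SA G Tgt f s a) :=
  (isOrthantLower_dwc_add_sum hf).inter (Box1_eq_Icc ▸ isOrthantLower_Icc 1)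

lemma exists_le_of_mem_SA {z : Vec n} (hz : z ∈ SA G Tgt f s a) :
    ∃ y : S → Vec n, (∀ s', y s' ∈ f s') ∧ z ≤ indVec Tgt s + ∑ s', G.δ s a s' • y s' := by
  obtain ⟨⟨d, hd, m, hm, rfl⟩, -⟩ := hz
  obtain ⟨w, hw, rfl⟩ := (mem_finsetSum _ _ _).1 hm
  choose y hy hwy using fun s' => mem_smul_set.1 (hw (Finset.mem_univ s'))
  rw [dwc_singleton] at hd
  exact ⟨y, hy, add_le_add hd.2 (Finset.sum_congr rfl fun s' _ => hwy s').ge⟩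

lemma zero_mem_SA (h0 : ∀ s', (0 : Vec n) ∈ f s') : (0 : Vec n) ∈ SA G Tgt f s a := by
  have hd : (0 : Vec n) ∈ dwc {indVec Tgt s} := by
    rw [dwc_singleton]; exact ⟨le_rfl, indVec_nonneg Tgt s⟩
  have hm : ∑ s' : S, G.δ s a s' • (0 : Vec n) ∈ ∑ s' : S, G.δ s a s' • f s' :=
    finsetSum_mem_finsetSum _ _ _ fun s' _ => smul_mem_smul_set (h0 s')
  refine ⟨by simpa using add_mem_add hd hm, ?_⟩
  rw [Box1_eq_Icc]; exact ⟨le_rfl, zero_le_one⟩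

lemma convex_SA (hf : ∀ s', Convex ℝ (f s')) : Convex ℝ (SA G Tgt f s a) := by
  unfold SA
  rw [dwc_singleton, Box1_eq_Icc]
  exact ((convex_Icc _ _).add (convex_sum _ fun s' _ => (hf s').smul _)).inter (convex_Icc _ _)

lemma SA_subset_Box1 : SA G Tgt f s a ⊆ Box1 n := inter_subset_right

lemma Bop_subset_Box1 : Bop G Tgt f s ⊆ Box1 n := by
  unfold Bop
  split_ifs
  · exact convexHull_min (iUnion₂_subset fun a _ => SA_subset_Box1)
      (by rw [Box1_eq_Icc]; exact convex_Icc _ _)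
  · obtain ⟨a, ha⟩ := G.av_nonempty s
    exact (iInter₂_subset a ha).trans SA_subset_Box1

lemma SA_mono (h : ∀ s', f s' ⊆ g s') : SA G Tgt f s a ⊆ SA G Tgt g s a :=
  inter_subset_inter_left _ <| add_subset_add_left <|
    finsetSum_subset_finsetSum _ _ _ fun s' _ => smul_set_mono (h s')

lemma Bop_mono (h : ∀ s', f s' ⊆ g s') : Bop G Tgt f s ⊆ Bop G Tgt g s := by
  unfold Bop
  split_ifs
  · exact convexHull_mono (iUnion₂_mono fun a _ => SA_mono h)
  · exact iInter₂_mono fun a _ => SA_mono h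

lemma convex_Bop (hf : ∀ s', Convex ℝ (f s')) : Convex ℝ (Bop G Tgt f s) := by
  unfold Bop
  split_ifs
  · exact convex_convexHull ℝ _
  · exact convex_iInter₂ fun a _ => convex_SA hf

lemma mem_Bop_of_forall_mem_SA {z : Vec n} (h : ∀ a ∈ G.Av s, z ∈ SA G Tgt f s a) :
    z ∈ Bop G Tgt f s := by
  unfold Bop
  split_ifs
  · obtain ⟨a, ha⟩ := G.av_nonempty s
    exact subset_convexHull ℝ _ (mem_biUnion ha (h a ha))
  · exact mem_iInter₂.2 h

lemma convex_bvi_fst : ∀ k s, Convex ℝ ((bvi G Tgt k).1 s)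
  | 0, _ => convex_singleton 0
  | k + 1, _ => convex_Bop fun s' => convex_bvi_fst k s'

lemma zero_mem_bvi_fst : ∀ k s, (0 : Vec n) ∈ (bvi G Tgt k).1 s
  | 0, _ => rfl
  | k + 1, _ => mem_Bop_of_forall_mem_SA fun _ _ => zero_mem_SA fun s' => zero_mem_bvi_fst k s'

end BellmanOperator

section Strategies

variable {G : SG S A} {T : Set S} {s : S} {a : A}

def actionSimplex (G : SG S A) (s : S) : Set (A → ℝ) :=
  {p | (∀ a, 0 ≤ p a) ∧ (∀ a, a ∉ G.Av s → p a = 0) ∧ ∑ a ∈ G.Av s, p a = 1}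

lemma single_mem_actionSimplex (ha : a ∈ G.Av s) : Pi.single a 1 ∈ actionSimplex G s := by
  refine ⟨fun b => ?_, fun b hb => Pi.single_eq_of_ne (ne_of_mem_of_not_mem ha hb).symm _, ?_⟩
  · rcases eq_or_ne b a with rfl | hb
    · simp
    · simp [Pi.single_eq_of_ne hb]
  · simp [Finset.sum_pi_single', ha]

def defaultDist (G : SG S A) (s : S) : A → ℝ := Pi.single (G.av_nonempty s).choose 1

lemma defaultDist_mem : defaultDist G s ∈ actionSimplex G s :=
  single_mem_actionSimplex (G.av_nonempty s).choose_spec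

lemma Strategy.choice_mem (σ : Strategy G) (h : List (S × A)) (t : S) :
    σ.choice h t ∈ actionSimplex G t :=
  ⟨σ.nonneg h t, σ.supp h t, σ.sum_one h t⟩

def strategyChoices (G : SG S A) : Set (List (S × A) → S → A → ℝ) :=
  {c | ∀ h t, c h t ∈ actionSimplex G t}

def Strategy.ofChoices (c : List (S × A) → S → A → ℝ) (hc : c ∈ strategyChoices G) :
    Strategy G where
  choice := c
  nonneg h t := (hc h t).1
  supp h t := (hc h t).2.1
  sum_one h t := (hc h t).2.2

instance : Nonempty (Strategy G) :=
  ⟨.ofChoices (fun _ => defaultDist G) fun _ _ => defaultDist_mem⟩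

def Strategy.shift (σ : Strategy G) (h₀ : List (S × A)) : Strategy G :=
  .ofChoices (fun h => σ.choice (h₀ ++ h)) fun h => σ.choice_mem (h₀ ++ h)

/-- The state reached after the first step of the history `h`, when `t` is the current state. -/
def firstState : List (S × A) → S → S
  | [], t => t
  | q :: _, _ => q.1

lemma firstState_append_singleton {S A : Type} (h : List (S × A)) (t t' : S) (b : A) :
    firstState (h ++ [(t, b)]) t' = firstState h t := by
  cases h <;> rfl

def Strategy.glue (s : S) (p : A → ℝ) (hp : p ∈ actionSimplex G s)
    (cont : A → S → Strategy G) : Strategy G :=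
  .ofChoices
    (fun h t => match h with
      | [] => if t = s then p else defaultDist G t
      | (_, a) :: rest => (cont a (firstState rest t)).choice rest t)
    (by
      rintro (_ | ⟨⟨_, a⟩, rest⟩) t
      · dsimp only
        split_ifs with ht
        · exact ht ▸ hp
        · exact defaultDist_mem
      · exact (cont a _).choice_mem rest t)

lemma Strategy.glue_choice_nil {p : A → ℝ} {hp : p ∈ actionSimplex G s}
    {cont : A → S → Strategy G} : (Strategy.glue s p hp cont).choice [] s = p :=
  if_pos rfl

def moveProb (σ τ : Strategy G) (h : List (S × A)) (t : S) (a : A) : ℝ :=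
  if G.isMax t then σ.choice h t a else τ.choice h t a

lemma moveProb_mem (σ τ : Strategy G) (h : List (S × A)) (t : S) :
    moveProb σ τ h t ∈ actionSimplex G t := by
  by_cases hM : G.isMax t
  · rw [show moveProb σ τ h t = σ.choice h t from funext fun _ => if_pos hM]
    exact σ.choice_mem h t
  · rw [show moveProb σ τ h t = τ.choice h t from funext fun _ => if_neg hM]
    exact τ.choice_mem h t

variable {σ τ : Strategy G}

lemma reachBy_succ (k : ℕ) (h : List (S × A)) (t : S) :
    reachBy G σ τ T (k + 1) h t = if t ∈ T then 1 else
      ∑ a ∈ G.Av t,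
        moveProb σ τ h t a * ∑ t', G.δ t a t' * reachBy G σ τ T k (h ++ [(t, a)]) t' :=
  rfl

lemma reachBy_mem_Icc : ∀ k h t, reachBy G σ τ T k h t ∈ Icc (0 : ℝ) 1
  | 0, _, _ => by unfold reachBy; split_ifs <;> norm_num
  | k + 1, h, t => by
    rw [reachBy_succ]
    split_ifs
    · norm_num
    · refine (convex_Icc (0 : ℝ) 1).sum_mem (fun a _ => (moveProb_mem σ τ h t).1 a)
        (moveProb_mem σ τ h t).2.2 fun a ha => ?_
      exact (convex_Icc (0 : ℝ) 1).sum_mem (fun t' _ => G.δ_nonneg t a t') (G.δ_sum t a ha)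
        fun t' _ => reachBy_mem_Icc k _ t'

lemma reachBy_le_succ : ∀ k h t, reachBy G σ τ T k h t ≤ reachBy G σ τ T (k + 1) h t
  | 0, h, t => by
    show (if t ∈ T then (1 : ℝ) else 0) ≤ _
    split_ifs with ht
    · rw [reachBy_succ, if_pos ht]
    · exact (reachBy_mem_Icc 1 h t).1
  | k + 1, h, t => by
    rw [reachBy_succ, reachBy_succ (k := k + 1)]
    split_ifs
    · exact le_rfl
    · refine Finset.sum_le_sum fun a _ =>
        mul_le_mul_of_nonneg_left ?_ ((moveProb_mem σ τ h t).1 a)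
      exact Finset.sum_le_sum fun t' _ =>
        mul_le_mul_of_nonneg_left (reachBy_le_succ k _ t') (G.δ_nonneg t a t')

lemma monotone_reachBy (h : List (S × A)) (t : S) : Monotone fun k => reachBy G σ τ T k h t :=
  monotone_nat_of_le_succ fun k => reachBy_le_succ k h t

lemma reachBy_le_probReach (k : ℕ) : reachBy G σ τ T k [] s ≤ probReach G σ τ s T :=
  le_ciSup (f := fun k => reachBy G σ τ T k [] s)
    ⟨1, by rintro _ ⟨k, rfl⟩; exact (reachBy_mem_Icc k [] s).2⟩ k

lemma reachBy_cons {q : S × A} (σ' τ' : S → Strategy G)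
    (hσ : ∀ rest t, σ.choice (q :: rest) t = (σ' (firstState rest t)).choice rest t)
    (hτ : ∀ rest t, τ.choice (q :: rest) t = (τ' (firstState rest t)).choice rest t) :
    ∀ k rest t, reachBy G σ τ T k (q :: rest) t =
      reachBy G (σ' (firstState rest t)) (τ' (firstState rest t)) T k rest t
  | 0, _, _ => rfl
  | k + 1, rest, t => by
    rw [reachBy_succ, reachBy_succ]
    split_ifs
    · rfl
    refine Finset.sum_congr rfl fun a _ => ?_
    rw [moveProb, moveProb, hσ, hτ]
    refine congrArg _ (Finset.sum_congr rfl fun t' _ => congrArg _ ?_)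
    rw [List.cons_append, reachBy_cons σ' τ' hσ hτ k, firstState_append_singleton]

lemma reachBy_succ_nil (hs : s ∉ T) (σ' τ' : A → S → Strategy G)
    (hσ : ∀ a rest t, σ.choice ((s, a) :: rest) t = (σ' a (firstState rest t)).choice rest t)
    (hτ : ∀ a rest t, τ.choice ((s, a) :: rest) t = (τ' a (firstState rest t)).choice rest t)
    (k : ℕ) :
    reachBy G σ τ T (k + 1) [] s = ∑ a ∈ G.Av s,
      moveProb σ τ [] s a * ∑ s', G.δ s a s' * reachBy G (σ' a s') (τ' a s') T k [] s' := by
  rw [reachBy_succ, if_neg hs]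
  refine Finset.sum_congr rfl fun a _ => congrArg _ (Finset.sum_congr rfl fun s' _ => ?_)
  exact congrArg _ (reachBy_cons (σ' a) (τ' a) (hσ a) (hτ a) k [] s')

end Strategies

section FiniteHorizon

variable {G : SG S A} {Tgt : Fin n → Set S} {f : S → Set (Vec n)} {s : S} {k : ℕ}

def AchBy (G : SG S A) (Tgt : Fin n → Set S) (k : ℕ) (s : S) : Set (Vec n) :=
  {v | v ∈ unitCube n ∧ ∃ σ : Strategy G, ∀ τ : Strategy G, ∀ i : Fin n,
    v i ≤ reachBy G σ τ (Tgt i) k [] s}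

lemma zero_mem_achBy : (0 : Vec n) ∈ AchBy G Tgt k s := by
  refine ⟨?_, Classical.arbitrary _, fun _ _ => (reachBy_mem_Icc _ _ _).1⟩
  rw [unitCube_eq_Icc]
  exact ⟨le_rfl, zero_le_one⟩

lemma achBy_subset_Ach : AchBy G Tgt k s ⊆ Ach G Tgt s :=
  fun _ ⟨hv, σ, hσ⟩ => ⟨hv, σ, fun τ i => (hσ τ i).trans (reachBy_le_probReach k)⟩

lemma isOrthantLower_achBy : IsOrthantLower (AchBy G Tgt k s) := by
  rintro v ⟨hv, σ, hσ⟩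
  rw [unitCube_eq_Icc] at hv
  refine ⟨hv.1, fun w hw => ⟨?_, σ, fun τ i => (hw.2 i).trans (hσ τ i)⟩⟩
  rw [unitCube_eq_Icc]
  exact ⟨hw.1, hw.2.trans hv.2⟩

/-- The witness plays `p` at `s` and then the strategies achieving the continuation vectors
`y a s'`; the weights `w` are the possible first moves at `s`: `p` at a Maximizer state, and any
choice of Minimizer otherwise. -/
lemma mem_achBy_succ_of_le_sum {v : Vec n} (hv : v ∈ unitCube n) {p : A → ℝ}
    (hp : p ∈ actionSimplex G s) {y : A → S → Vec n}
    (hy : ∀ a ∈ G.Av s, ∀ s', y a s' ∈ AchBy G Tgt k s')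
    (hle : ∀ w ∈ actionSimplex G s, (G.isMax s → w = p) → ∀ i, s ∉ Tgt i →
      v i ≤ ∑ a ∈ G.Av s, w a * ∑ s', G.δ s a s' * y a s' i) :
    v ∈ AchBy G Tgt (k + 1) s := by
  have hcont : ∀ a s', ∃ σ : Strategy G,
      a ∈ G.Av s → ∀ τ i, y a s' i ≤ reachBy G σ τ (Tgt i) k [] s' := by
    intro a s'
    by_cases ha : a ∈ G.Av s
    · obtain ⟨-, σ, hσ⟩ := hy a ha s'
      exact ⟨σ, fun _ => hσ⟩
    · exact ⟨Classical.arbitrary _, fun h => absurd h ha⟩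
  choose cont hcont using hcont
  refine ⟨hv, Strategy.glue s p hp cont, fun τ i => ?_⟩
  by_cases hs : s ∈ Tgt i
  · rw [reachBy_succ, if_pos hs]
    rw [unitCube_eq_Icc] at hv
    exact hv.2 i
  rw [reachBy_succ_nil hs cont (fun a _ => τ.shift [(s, a)]) (fun _ _ _ => rfl) fun _ _ _ => rfl]
  have hw := moveProb_mem (Strategy.glue s p hp cont) τ [] s
  have hwp : G.isMax s → moveProb (Strategy.glue s p hp cont) τ [] s = p := fun hM =>
    funext fun a => (if_pos hM).trans (congrFun Strategy.glue_choice_nil a)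
  refine (hle _ hw hwp i hs).trans (Finset.sum_le_sum fun a ha => ?_)
  refine mul_le_mul_of_nonneg_left (Finset.sum_le_sum fun s' _ => ?_) (hw.1 a)
  exact mul_le_mul_of_nonneg_left (hcont a s' ha _ i) (G.δ_nonneg s a s')

lemma Bop_subset_achBy_succ (hf : ∀ s', f s' ⊆ AchBy G Tgt k s')
    (hconv : ∀ s', Convex ℝ (f s')) (h0 : ∀ s', (0 : Vec n) ∈ f s') :
    Bop G Tgt f s ⊆ AchBy G Tgt (k + 1) s := by
  intro v hv
  have hvC : v ∈ unitCube n := by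
    rw [unitCube_eq_Icc, ← Box1_eq_Icc]; exact Bop_subset_Box1 hv
  by_cases hM : G.isMax s
  · simp only [Bop, if_pos hM] at hv
    obtain ⟨q, hq, z, hz, rfl⟩ := exists_sum_smul_of_mem_convexHull_biUnion
      (fun a _ => convex_SA hconv) (fun a _ => ⟨0, zero_mem_SA h0⟩) hv
    choose! y hy hzy using fun a ha => exists_le_of_mem_SA (hz a ha)
    refine mem_achBy_succ_of_le_sum hvC hq (fun a ha s' => hf s' (hy a ha s'))
      fun w _ hwq i hs => ?_
    rw [hwq hM, Finset.sum_apply]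
    refine Finset.sum_le_sum fun a ha => mul_le_mul_of_nonneg_left ?_ (hq.1 a)
    simpa [indVec, hs] using hzy a ha i
  · simp only [Bop, if_neg hM, mem_iInter₂] at hv
    choose! y hy hvy using fun a ha => exists_le_of_mem_SA (hv a ha)
    refine mem_achBy_succ_of_le_sum hvC defaultDist_mem (fun a ha s' => hf s' (hy a ha s'))
      fun w hw _ i hs => ?_
    calc v i = ∑ a ∈ G.Av s, w a * v i := by rw [← Finset.sum_mul, hw.2.2, one_mul]
      _ ≤ _ := Finset.sum_le_sum fun a ha => mul_le_mul_of_nonneg_left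
          (by simpa [indVec, hs] using hvy a ha i) (hw.1 a)

lemma bvi_fst_subset_achBy : ∀ k s, (bvi G Tgt k).1 s ⊆ AchBy G Tgt k s
  | 0, _ => by
    rintro _ rfl
    exact zero_mem_achBy
  | k + 1, _ => Bop_subset_achBy_succ (fun s' => bvi_fst_subset_achBy k s')
      (convex_bvi_fst k) (zero_mem_bvi_fst k)

end FiniteHorizon

section Completeness

variable {G : SG S A} {Tgt : Fin n → Set S} {s : S} {a : A} {k : ℕ}

def guaranteed (σ : Strategy G) (Tgt : Fin n → Set S) (k : ℕ) (s : S) : Vec n :=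
  fun i => ⨅ τ : Strategy G, reachBy G σ τ (Tgt i) k [] s

lemma guaranteed_le (σ τ : Strategy G) (i : Fin n) :
    guaranteed σ Tgt k s i ≤ reachBy G σ τ (Tgt i) k [] s :=
  ciInf_le ⟨0, by rintro _ ⟨τ, rfl⟩; exact (reachBy_mem_Icc _ _ _).1⟩ τ

lemma guaranteed_mem_Icc (σ : Strategy G) : guaranteed σ Tgt k s ∈ Icc 0 1 :=
  ⟨fun _ => le_ciInf fun _ => (reachBy_mem_Icc _ _ _).1,
    fun i => (guaranteed_le σ (Classical.arbitrary _) i).trans (reachBy_mem_Icc _ _ _).2⟩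

lemma guaranteed_mem_achBy (σ : Strategy G) : guaranteed σ Tgt k s ∈ AchBy G Tgt k s :=
  ⟨unitCube_eq_Icc ▸ guaranteed_mem_Icc σ, σ, guaranteed_le σ⟩

def stepVec (G : SG S A) (Tgt : Fin n → Set S) (s : S) (a : A) (u : S → Vec n) : Vec n :=
  fun i => if s ∈ Tgt i then 1 else ∑ s', G.δ s a s' * u s' i

lemma stepVec_mem_SA {f : S → Set (Vec n)} (hf : ∀ s', IsOrthantLower (f s')) {u : S → Vec n}
    (hu : ∀ s', u s' ∈ f s') (hu1 : ∀ s', u s' ≤ 1) (ha : a ∈ G.Av s) :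
    stepVec G Tgt s a u ∈ SA G Tgt f s a := by
  have hsum : ∀ i, ∑ s', G.δ s a s' * u s' i ∈ Icc (0 : ℝ) 1 := fun i =>
    (convex_Icc (0 : ℝ) 1).sum_mem (fun s' _ => G.δ_nonneg s a s') (G.δ_sum s a ha)
      fun s' _ => ⟨(hf s' (hu s')).1 i, hu1 s' i⟩
  refine mem_SA_of_le hf hu ?_ fun i => ?_
  · rw [Box1_eq_Icc]
    refine ⟨fun i => ?_, fun i => ?_⟩ <;> by_cases hs : s ∈ Tgt i <;>
      simp [stepVec, hs, (hsum i).1, (hsum i).2]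
  · by_cases hs : s ∈ Tgt i
    · simpa [stepVec, indVec, hs, Finset.sum_apply] using (hsum i).1
    · simp [stepVec, indVec, hs, Finset.sum_apply]

/-- Minimizer answers each first step `(a, s')` with an almost optimal reply to the
corresponding shift of `σ`. -/
lemma le_sum_guaranteed_shift {σ : Strategy G} {v : Vec n} {i : Fin n}
    (hσ : ∀ τ, v i ≤ reachBy G σ τ (Tgt i) (k + 1) [] s) (hs : s ∉ Tgt i)
    {p : A → ℝ} (hp : p ∈ actionSimplex G s) :
    v i ≤ ∑ a ∈ G.Av s, (if G.isMax s then σ.choice [] s a else p a) *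
      ∑ s', G.δ s a s' * guaranteed (σ.shift [(s, a)]) Tgt k s' i := by
  have hprod : ∀ g : A → S → ℝ,
      ∑ a ∈ G.Av s, (if G.isMax s then σ.choice [] s a else p a) * ∑ s', G.δ s a s' * g a s' =
        ∑ q ∈ G.Av s ×ˢ Finset.univ,
          ((if G.isMax s then σ.choice [] s q.1 else p q.1) * G.δ s q.1 q.2) * g q.1 q.2 := by
    intro g
    simp only [Finset.sum_product, Finset.mul_sum, mul_assoc]
  rw [hprod fun a s' => guaranteed (σ.shift [(s, a)]) Tgt k s' i]
  refine le_sum_mul_iInf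
    (w := fun q : A × S => (if G.isMax s then σ.choice [] s q.1 else p q.1) * G.δ s q.1 q.2)
    (F := fun (q : A × S) τ => reachBy G (σ.shift [(s, q.1)]) τ (Tgt i) k [] q.2)
    (fun q _ => mul_nonneg ?_ (G.δ_nonneg _ _ _)) fun c => ?_
  · split_ifs
    exacts [σ.nonneg _ _ _, hp.1 _]
  have := hσ (Strategy.glue s p hp fun a s' => c (a, s'))
  rw [reachBy_succ_nil hs (fun a _ => σ.shift [(s, a)]) (fun a s' => c (a, s'))
    (fun _ _ _ => rfl) fun _ _ _ => rfl] at this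
  rw [← hprod fun a s' => reachBy G (σ.shift [(s, a)]) (c (a, s')) (Tgt i) k [] s']
  simpa only [moveProb, Strategy.glue_choice_nil] using this

lemma le_sum_smul_stepVec {σ : Strategy G} {v : Vec n} (hv : v ≤ 1)
    (hσ : ∀ τ i, v i ≤ reachBy G σ τ (Tgt i) (k + 1) [] s) {p : A → ℝ}
    (hp : p ∈ actionSimplex G s) :
    v ≤ ∑ a ∈ G.Av s, (if G.isMax s then σ.choice [] s a else p a) •
      stepVec G Tgt s a fun s' => guaranteed (σ.shift [(s, a)]) Tgt k s' := by
  intro i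
  simp only [Finset.sum_apply, Pi.smul_apply, smul_eq_mul, stepVec]
  by_cases hs : s ∈ Tgt i
  · have hw : ∑ a ∈ G.Av s, (if G.isMax s then σ.choice [] s a else p a) = 1 := by
      split_ifs
      exacts [(σ.choice_mem [] s).2.2, hp.2.2]
    simpa only [hs, if_true, mul_one, hw, Pi.one_apply] using hv i
  · simpa only [hs, if_false] using le_sum_guaranteed_shift (fun τ => hσ τ i) hs hp

lemma achBy_succ_subset_Bop : AchBy G Tgt (k + 1) s ⊆ Bop G Tgt (AchBy G Tgt k) s := by
  rintro v ⟨hv, σ, hσ⟩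
  rw [unitCube_eq_Icc] at hv
  have hlow : ∀ s', IsOrthantLower (AchBy G Tgt k s') := fun _ => isOrthantLower_achBy
  have hx : ∀ a ∈ G.Av s, (stepVec G Tgt s a fun s' => guaranteed (σ.shift [(s, a)]) Tgt k s') ∈
      SA G Tgt (AchBy G Tgt k) s a := fun a ha =>
    stepVec_mem_SA hlow (fun _ => guaranteed_mem_achBy _) (fun _ => (guaranteed_mem_Icc _).2) ha
  by_cases hM : G.isMax s
  · have hle := le_sum_smul_stepVec hv.2 hσ defaultDist_mem
    simp only [hM, if_true] at hle
    have hv' := (IsOrthantLower.finsetSum _ fun a _ =>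
      (isOrthantLower_SA hlow).smul ((σ.choice_mem [] s).1 a))
      (finsetSum_mem_finsetSum _ _ _ fun a ha => smul_mem_smul_set (hx a ha)) |>.2 ⟨hv.1, hle⟩
    simp only [Bop, if_pos hM]
    exact finsetSum_smul_subset_convexHull (fun a _ => (σ.choice_mem [] s).1 a)
      (σ.choice_mem [] s).2.2 _ hv'
  · refine mem_Bop_of_forall_mem_SA fun a ha => (isOrthantLower_SA hlow (hx a ha)).2 ⟨hv.1, ?_⟩
    simpa [hM, Pi.single_apply, ha] using
      le_sum_smul_stepVec hv.2 hσ (single_mem_actionSimplex ha)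

lemma achBy_zero_subset_Bop : AchBy G Tgt 0 s ⊆ Bop G Tgt (fun _ => {0}) s := by
  rintro v ⟨hv, σ, hσ⟩
  rw [unitCube_eq_Icc] at hv
  refine mem_Bop_of_forall_mem_SA fun a _ => mem_SA_of_le (fun _ => isOrthantLower_zero)
    (y := fun _ => 0) (fun _ => rfl) (by rwa [Box1_eq_Icc]) fun i => ?_
  simpa [indVec, reachBy] using hσ σ i

lemma achBy_subset_bvi_fst : ∀ k s, AchBy G Tgt k s ⊆ (bvi G Tgt (k + 1)).1 s
  | 0, _ => achBy_zero_subset_Bop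
  | k + 1, _ => achBy_succ_subset_Bop.trans (Bop_mono fun s' => achBy_subset_bvi_fst k s')

lemma Llim_eq_iUnion_achBy : Llim G Tgt s = ⋃ k, AchBy G Tgt k s :=
  Subset.antisymm (iUnion_mono fun k => bvi_fst_subset_achBy k s) <| iUnion_subset fun k =>
    (achBy_subset_bvi_fst k s).trans (subset_iUnion (fun k => (bvi G Tgt k).1 s) (k + 1))

end Completeness

section Compactness

variable {G : SG S A} {Tgt : Fin n → Set S} {s : S}

lemma isCompact_actionSimplex (G : SG S A) (s : S) : IsCompact (actionSimplex G s) := by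
  have hclosed : IsClosed (actionSimplex G s) := by
    have : actionSimplex G s = (⋂ a, {p | 0 ≤ p a}) ∩ (⋂ a ∈ (G.Av s : Set A)ᶜ, {p | p a = 0}) ∩
        {p | ∑ a ∈ G.Av s, p a = 1} := by
      ext p
      simp [actionSimplex, and_assoc]
    rw [this]
    exact ((isClosed_iInter fun a => isClosed_le continuous_const (continuous_apply a)).inter
      (isClosed_biInter fun a _ => isClosed_eq (continuous_apply a) continuous_const)).inter
      (isClosed_eq (by fun_prop) continuous_const)
  refine (isCompact_univ_pi fun _ => isCompact_Icc (a := (0 : ℝ)) (b := 1)).of_isClosed_subset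
    hclosed fun p hp => mem_univ_pi.2 fun a => ⟨hp.1 a, ?_⟩
  by_cases ha : a ∈ G.Av s
  · exact hp.2.2 ▸ Finset.single_le_sum (fun b _ => hp.1 b) ha
  · exact (hp.2.1 a ha).trans_le zero_le_one

lemma isCompact_strategyChoices : IsCompact (strategyChoices G) := by
  have : strategyChoices G = univ.pi fun _ => univ.pi fun t => actionSimplex G t := by
    ext c
    simp [strategyChoices]
  rw [this]
  exact isCompact_univ_pi fun _ => isCompact_univ_pi fun t => isCompact_actionSimplex G t

lemma continuous_reachBy_ofChoices (σ : Strategy G) (T : Set S) :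
    ∀ k h t, Continuous fun c : strategyChoices G =>
      reachBy G σ (Strategy.ofChoices c.1 c.2) T k h t
  | 0, _, _ => continuous_const
  | k + 1, h, t => by
    simp only [reachBy_succ]
    by_cases ht : t ∈ T
    · simp only [ht, if_true]
      exact continuous_const
    simp only [ht, if_false]
    refine continuous_finsetSum _ fun a _ => Continuous.mul ?_ <| continuous_finsetSum _
      fun t' _ => continuous_const.mul (continuous_reachBy_ofChoices σ T k _ t')
    by_cases hM : G.isMax t
    · simp only [moveProb, hM, if_true]
      exact continuous_const
    · simp only [moveProb, hM, if_false]
      change Continuous fun c : strategyChoices G => c.1 h t a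
      exact (continuous_apply a).comp ((continuous_apply_apply h t).comp continuous_subtype_val)

/-- By compactness of Minimizer's strategy space, the horizon needed to come within a factor `c`
of what `σ` achieves can be chosen uniformly in Minimizer's strategy. -/
lemma exists_smul_mem_achBy {v : Vec n} (hv : v ∈ Ach G Tgt s) {c : ℝ} (hc0 : 0 ≤ c)
    (hc1 : c < 1) : ∃ k, c • v ∈ AchBy G Tgt k s := by
  obtain ⟨hvC, σ, hσ⟩ := hv
  rw [unitCube_eq_Icc] at hvC
  have := isCompact_iff_compactSpace.1 (isCompact_strategyChoices (G := G))
  have hk : ∀ i, ∃ k, ∀ τ : Strategy G, c * v i ≤ reachBy G σ τ (Tgt i) k [] s := by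
    intro i
    rcases (hvC.1 i).eq_or_lt with hvi | hvi
    · exact ⟨0, fun τ => by rw [← hvi, Pi.zero_apply, mul_zero]; exact (reachBy_mem_Icc _ _ _).1⟩
    obtain ⟨k, hk⟩ := exists_forall_lt_of_monotone
      (F := fun k (x : strategyChoices G) => reachBy G σ (.ofChoices x.1 x.2) (Tgt i) k [] s)
      (fun k => continuous_reachBy_ofChoices σ _ k [] s)
      (fun k l hkl x => monotone_reachBy [] s hkl) fun x =>
        exists_lt_of_lt_ciSup ((mul_lt_of_lt_one_left hvi hc1).trans_le (hσ _ i))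
    exact ⟨k, fun τ => (hk ⟨τ.choice, τ.choice_mem⟩).le⟩
  choose K hK using hk
  refine ⟨Finset.univ.sup K, ?_, σ, fun τ i => (hK i τ).trans
    (monotone_reachBy [] s (Finset.le_sup (Finset.mem_univ i)))⟩
  rw [unitCube_eq_Icc]
  exact ⟨smul_nonneg hc0 hvC.1, fun i => by
    simpa using mul_le_one₀ hc1.le (hvC.1 i) (hvC.2 i)⟩

end Compactness

lemma euclNorm_smul {c : ℝ} (hc : 0 ≤ c) (x : Vec n) : euclNorm (c • x) = c * euclNorm x := by
  simp only [euclNorm, Pi.smul_apply, smul_eq_mul, mul_pow, ← Finset.mul_sum]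
  rw [Real.sqrt_mul (sq_nonneg c), Real.sqrt_sq hc]

lemma dirOf_smul {c : ℝ} (hc : 0 < c) (x : Vec n) : dirOf (c • x) = dirOf x := by
  ext z
  constructor
  · rintro ⟨l, hl, rfl⟩
    exact ⟨l * c, mul_pos hl hc, by rw [smul_smul]⟩
  · rintro ⟨l, hl, rfl⟩
    exact ⟨l / c, div_pos hl hc, by rw [smul_smul, div_mul_cancel₀ _ hc.ne']⟩

lemma evalIn_nonneg (X D : Set (Vec n)) : 0 ≤ evalIn X D :=
  Real.sSup_nonneg (by rintro _ ⟨x, -, rfl⟩; exact Real.sqrt_nonneg _)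

lemma bddAbove_euclNorm_image {X : Set (Vec n)} (hX : X ⊆ Box1 n) (P : Vec n → Prop) :
    BddAbove (euclNorm '' {x | x ∈ X ∧ P x}) := by
  have hcont : Continuous (euclNorm : Vec n → ℝ) := by unfold euclNorm; fun_prop
  refine ((isCompact_Icc (a := (0 : Vec n)) (b := 1)).image hcont).bddAbove.mono
    (image_mono fun x hx => ?_)
  rw [← Box1_eq_Icc]
  exact hX hx.1

lemma evalIn_eq_of_smul_mem {X Y : Set (Vec n)} (hXY : X ⊆ Y) (hY : Y ⊆ Box1 n)
    (hsmul : ∀ y ∈ Y, ∀ c : ℝ, 0 < c → c < 1 → c • y ∈ X) (D : Set (Vec n)) :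
    evalIn X D = evalIn Y D := by
  have hbddX := bddAbove_euclNorm_image (hXY.trans hY) (dirOf · = D)
  refine le_antisymm (Real.sSup_le ?_ (evalIn_nonneg Y D)) (Real.sSup_le ?_ (evalIn_nonneg X D))
  · rintro _ ⟨x, ⟨hx, hxD⟩, rfl⟩
    exact le_csSup (bddAbove_euclNorm_image hY (dirOf · = D)) ⟨x, ⟨hXY hx, hxD⟩, rfl⟩
  rintro _ ⟨y, ⟨hy, hyD⟩, rfl⟩
  refine le_of_forall_lt_imp_le_of_dense fun r hr => ?_
  rcases le_or_gt r 0 with hr0 | hr0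
  · exact hr0.trans (evalIn_nonneg X D)
  have hc : 0 < r / euclNorm y := div_pos hr0 (hr0.trans hr)
  calc r = euclNorm ((r / euclNorm y) • y) := by
        rw [euclNorm_smul hc.le, div_mul_cancel₀ _ (hr0.trans hr).ne']
    _ ≤ evalIn X D := le_csSup hbddX ⟨_, ⟨hsmul y hy _ hc ((div_lt_one (hr0.trans hr)).2 hr),
        by rw [dirOf_smul hc, hyD]⟩, rfl⟩

/-- Convergence from below: `L_inf(s)[d] = Ach(s)[d]`. -/
theorem mo_bvi_convergence_from_below (G : SG S A) (Tgt : Fin n → Set S) :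
    ∀ s : S, ∀ D ∈ Dir n, evalIn (Llim G Tgt s) D = evalIn (Ach G Tgt s) D := by
  intro s D _
  rw [Llim_eq_iUnion_achBy]
  refine evalIn_eq_of_smul_mem (iUnion_subset fun k => achBy_subset_Ach) (fun v hv => ?_)
    (fun v hv c hc0 hc1 => mem_iUnion.2 (exists_smul_mem_achBy hv hc0.le hc1)) D
  rw [Box1_eq_Icc, ← unitCube_eq_Icc]
  exact hv.1

end
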